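/- Scalar version of Proposition 1: for y ∈ ℝ^N, z ∈ ℝ^N with z ≠ 0, the unique minimizer over x ∈ ℝ^N of |x'z| + (1/2)‖x−y‖₂² is x̂ = y − g·z where g = sign(y'z)·min(|y'z|/‖z‖₂², 1); moreover x̂'z = y'z − g‖z‖₂². -/

import Mathlib

open Matrix

/-!
Write `f x = |x'z| + ½‖x - y‖²` and `x̂ = y - g z`. The choice of `g` makes it a subgradient of
`|·|` at `x̂'z`: `|g| ≤ 1` and `g (x̂'z) = |x̂'z|`. Hence `|x'z| - |x̂'z| ≥ g (x - x̂)'z`, while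
`½‖x - y‖² - ½‖x̂ - y‖² = -g (x - x̂)'z + ½‖x - x̂‖²`; adding gives `f x ≥ f x̂ + ½‖x - x̂‖²`.
-/

theorem min_div_one_mul_sub_eq_abs (s : ℝ) {Z : ℝ} (hZ : 0 < Z) :
    min (s / Z) 1 * (s - min (s / Z) 1 * Z) = |s - min (s / Z) 1 * Z| := by
  rcases le_total s Z with h | h
  · rw [min_eq_left ((div_le_one hZ).2 h), div_mul_cancel₀ s hZ.ne']
    simp
  · rw [min_eq_right ((one_le_div hZ).2 h), one_mul, one_mul, abs_of_nonneg (sub_nonneg.2 h)]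

theorem abs_sign_mul_min_le_one (s : ℝ) {Z : ℝ} (hZ : 0 ≤ Z) :
    |Real.sign s * min (|s| / Z) 1| ≤ 1 := by
  rw [abs_mul, abs_of_nonneg (le_min (div_nonneg (abs_nonneg s) hZ) zero_le_one)]
  rcases Real.sign_apply_eq s with h | h | h <;> simp [h]

theorem sign_mul_min_mul_sub_eq_abs (s : ℝ) {Z : ℝ} (hZ : 0 < Z) :
    let g := Real.sign s * min (|s| / Z) 1
    g * (s - g * Z) = |s - g * Z| := by
  intro g
  rcases lt_trichotomy s 0 with hs | rfl | hs
  · have h := min_div_one_mul_sub_eq_abs (-s) hZ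
    simp only [g, Real.sign_of_neg hs, abs_of_neg hs]
    rw [show s - -1 * min (-s / Z) 1 * Z = -(-s - min (-s / Z) 1 * Z) by ring, abs_neg]
    linear_combination h
  · simp [g]
  · simpa only [g, Real.sign_of_pos hs, abs_of_pos hs, one_mul]
      using min_div_one_mul_sub_eq_abs s hZ

section

variable {ι : Type*} [Fintype ι]

theorem sum_sq_pos_of_ne_zero {v : ι → ℝ} (hv : v ≠ 0) : 0 < ∑ j, v j ^ 2 := by
  obtain ⟨j, hj⟩ := Function.ne_iff.1 hv
  exact Finset.sum_pos' (fun i _ => sq_nonneg (v i)) ⟨j, Finset.mem_univ j, sq_pos_of_ne_zero hj⟩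

theorem sub_smul_dotProduct (y z : ι → ℝ) (g : ℝ) :
    (y - g • z) ⬝ᵥ z = y ⬝ᵥ z - g * ∑ j, z j ^ 2 := by
  rw [sub_dotProduct, smul_dotProduct, smul_eq_mul]
  simp only [dotProduct, sq]

theorem sum_sq_sub_eq (x y z : ι → ℝ) (g : ℝ) :
    ∑ j, (x j - y j) ^ 2 = ∑ j, ((y - g • z) j - y j) ^ 2
      - 2 * g * (x ⬝ᵥ z - (y - g • z) ⬝ᵥ z) + ∑ j, (x j - (y - g • z) j) ^ 2 := by
  simp only [dotProduct, Finset.mul_sum, ← Finset.sum_sub_distrib, ← Finset.sum_add_distrib]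
  exact Finset.sum_congr rfl fun j _ => by simp only [Pi.sub_apply, Pi.smul_apply, smul_eq_mul]; ring

noncomputable def l1ProxObjective (z y x : ι → ℝ) : ℝ := |x ⬝ᵥ z| + 1 / 2 * ∑ j, (x j - y j) ^ 2

theorem l1ProxObjective_add_half_sum_sq_le {y z : ι → ℝ} {g : ℝ} (hg : |g| ≤ 1)
    (hopt : g * ((y - g • z) ⬝ᵥ z) = |(y - g • z) ⬝ᵥ z|) (x : ι → ℝ) :
    l1ProxObjective z y (y - g • z) + 1 / 2 * ∑ j, (x j - (y - g • z) j) ^ 2 ≤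
      l1ProxObjective z y x := by
  have hsub : g * (x ⬝ᵥ z) ≤ |x ⬝ᵥ z| :=
    (le_abs_self _).trans <| by rw [abs_mul]; exact mul_le_of_le_one_left (abs_nonneg _) hg
  rw [l1ProxObjective, l1ProxObjective, sum_sq_sub_eq x y z g]
  linarith

theorem l1ProxObjective_lt_of_ne {y z : ι → ℝ} {g : ℝ} (hg : |g| ≤ 1)
    (hopt : g * ((y - g • z) ⬝ᵥ z) = |(y - g • z) ⬝ᵥ z|) {x : ι → ℝ} (hx : x ≠ y - g • z) :
    l1ProxObjective z y (y - g • z) < l1ProxObjective z y x := by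
  have hpos : 0 < ∑ j, (x j - (y - g • z) j) ^ 2 := sum_sq_pos_of_ne_zero (sub_ne_zero.2 hx)
  linarith [l1ProxObjective_add_half_sum_sq_le hg hopt x]

end

theorem prop1_ell1_prox_vector {N : ℕ}
    (y z : Fin N → ℝ) (hz : z ≠ 0) :
    let g : ℝ := Real.sign (y ⬝ᵥ z) * min (|y ⬝ᵥ z| / (∑ j, z j ^ 2)) 1
    let xhat : Fin N → ℝ := y - g • z
    (∀ x : Fin N → ℝ, x ≠ xhat →
      |xhat ⬝ᵥ z| + (1 / 2) * (∑ j, (xhat j - y j) ^ 2) <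
        |x ⬝ᵥ z| + (1 / 2) * (∑ j, (x j - y j) ^ 2)) ∧
      xhat ⬝ᵥ z = y ⬝ᵥ z - g * (∑ j, z j ^ 2) := by
  intro g xhat
  have hZ := sum_sq_pos_of_ne_zero hz
  have hxhat := sub_smul_dotProduct y z g
  have hopt : g * (xhat ⬝ᵥ z) = |xhat ⬝ᵥ z| := by
    rw [hxhat]; exact sign_mul_min_mul_sub_eq_abs (y ⬝ᵥ z) hZ
  exact ⟨fun x hx => l1ProxObjective_lt_of_ne (abs_sign_mul_min_le_one _ hZ.le) hopt hx, hxhat⟩
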